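/- In the CIR multiple-jump tree with drift μ_Y(y) = κ(θ−y), κ,θ,σ > 0, if the down jump is multiple, i.e. k_d(n,k) ≤ k−1, then for sufficiently small h the node satisfies y^n_k > θ*/h with θ* = σ²/(4κ²). -/
import Mathlib


open Real

/-- The node values of the CIR binomial lattice. -/
noncomputable def latticeY (Y₀ σ h : ℝ) (n k : ℕ) : ℝ :=
  if 0 < Real.sqrt Y₀ + σ / 2 * (2 * (k : ℝ) - (n : ℝ)) * Real.sqrt h then
    (Real.sqrt Y₀ + σ / 2 * (2 * (k : ℝ) - (n : ℝ)) * Real.sqrt h) ^ 2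
  else 0

open scoped Classical in
/-- The "down jump" index k_d(n,k) of the CIR multiple-jump tree:
the largest k* with 0 ≤ k* ≤ k and y^n_k + κ(θ−y^n_k)h ≥ y^{n+1}_{k*},
with the convention k_d = 0 if no such k* exists. -/
noncomputable def kDown (Y₀ σ h κ θ : ℝ) (n k : ℕ) : ℕ :=
  let S := (Finset.Icc 0 k).filter fun j =>
    latticeY Y₀ σ h (n + 1) j ≤ latticeY Y₀ σ h n k + κ * (θ - latticeY Y₀ σ h n k) * h
  if hS : S.Nonempty then S.max' hS else 0

open scoped Classical in
lemma kDown_ge (Y₀ σ h κ θ : ℝ) (n k : ℕ)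
    (hk : latticeY Y₀ σ h (n + 1) k ≤ latticeY Y₀ σ h n k + κ * (θ - latticeY Y₀ σ h n k) * h) :
    k ≤ kDown Y₀ σ h κ θ n k := by
  have hmem : k ∈ (Finset.Icc 0 k).filter fun j =>
      latticeY Y₀ σ h (n + 1) j ≤ latticeY Y₀ σ h n k + κ * (θ - latticeY Y₀ σ h n k) * h := by
    simp only [Finset.mem_filter, Finset.mem_Icc]
    exact ⟨⟨Nat.zero_le _, le_refl _⟩, hk⟩
  unfold kDown
  rw [dif_pos ⟨k, hmem⟩]
  exact Finset.le_max' _ k hmem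

/-- If the down jump is multiple, i.e. k_d(n,k) ≤ k−1, then for all sufficiently
small h one has y^n_k > θ*/h with θ* = σ²/(4κ²). -/
theorem multiple_down_jump_implies_large_node
    (Y₀ σ κ θ : ℝ) (hY₀ : 0 < Y₀) (hσ : 0 < σ) (hκ : 0 < κ) (hθ : 0 < θ) :
    ∃ h₀ > 0, ∀ h : ℝ, 0 < h → h < h₀ →
      ∀ n k : ℕ, k ≤ n →
        kDown Y₀ σ h κ θ n k < k →
        σ ^ 2 / (4 * κ ^ 2) / h < latticeY Y₀ σ h n k := by
  refine ⟨1/κ, by positivity, fun h hh hh0 n k hkn hkd => ?_⟩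
  have hs : (0:ℝ) < Real.sqrt h := Real.sqrt_pos.mpr hh
  have hs2 : (Real.sqrt h)^2 = h := Real.sq_sqrt hh.le
  have hκh : κ * h < 1 := by
    have := (lt_div_iff₀ hκ).mp hh0
    nlinarith
  have hknot : latticeY Y₀ σ h n k + κ * (θ - latticeY Y₀ σ h n k) * h
      < latticeY Y₀ σ h (n+1) k := by
    by_contra hc
    push_neg at hc
    have := kDown_ge Y₀ σ h κ θ n k hc
    omega
  set s := Real.sqrt h with hsdef
  set b := Real.sqrt Y₀ + σ / 2 * (2 * (k : ℝ) - (n : ℝ)) * s with hbdef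
  have e1 : latticeY Y₀ σ h n k = if 0 < b then b ^ 2 else 0 := rfl
  have e2 : latticeY Y₀ σ h (n+1) k
      = if 0 < b - σ / 2 * s then (b - σ / 2 * s) ^ 2 else 0 := by
    rw [latticeY]
    have hcast : ((n + 1 : ℕ) : ℝ) = (n : ℝ) + 1 := by push_cast; ring
    rw [hcast]
    have harg : Real.sqrt Y₀ + σ / 2 * (2 * (k : ℝ) - ((n : ℝ) + 1)) * s
        = b - σ / 2 * s := by rw [hbdef]; ring
    rw [harg]
  rw [e1, e2] at hknot
  rw [e1]
  clear hsdef hbdef e1 e2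
  clear_value s b
  by_cases hb : 0 < b
  · rw [if_pos hb] at hknot ⊢
    by_cases hb' : 0 < b - σ / 2 * s
    · rw [if_pos hb'] at hknot
      rw [div_lt_iff₀ hh, ← hs2]
      rw [← hs2] at hknot
      by_contra hcon
      push_neg at hcon
      have h4 : (0:ℝ) < 4 * κ ^ 2 := by positivity
      have ht2 : 4 * κ ^ 2 * (b * s) ^ 2 ≤ σ ^ 2 := by
        calc 4 * κ ^ 2 * (b * s) ^ 2 = 4 * κ ^ 2 * (b ^ 2 * s ^ 2) := by ring
          _ ≤ 4 * κ ^ 2 * (σ ^ 2 / (4 * κ ^ 2)) := by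
              exact mul_le_mul_of_nonneg_left hcon h4.le
          _ = σ ^ 2 := by field_simp
      have ht : 2 * κ * (b * s) ≤ σ := by
        nlinarith [sq_nonneg (2 * κ * (b * s) - σ), mul_pos hb hs, hσ]
      nlinarith [mul_pos hb hs, mul_pos hb' hs, hσ,
        mul_pos (mul_pos hκ hθ) (pow_pos hs 2)]
    · rw [if_neg hb'] at hknot
      nlinarith [sq_nonneg b, mul_pos (mul_pos hκ hθ) hh, hκh]
  · rw [if_neg hb] at hknot ⊢
    push_neg at hb
    have hb2 : ¬ (0 < b - σ / 2 * s) := by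
      push_neg
      nlinarith [mul_pos hσ hs]
    rw [if_neg hb2] at hknot
    nlinarith [mul_pos (mul_pos hκ hθ) hh]
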